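/- For all k ≥ 1 and m ≥ 0, B(k,m) = Σ_{j=1}^{k} (−1)^{j−1} · j · binom(2k−m−j, j) · C_{k−j}, evaluated in ℤ, where binom(2k−m−j, j) is interpreted as 0 whenever 2k−m−j < j or 2k−m−j < 0. -/

import Mathlib

/-- The binary word `0^j 1^{k-j}` (here `false` plays the role of `0` and
`true` the role of `1`). -/
def pat (k j : ℕ) : List Bool := List.replicate j false ++ List.replicate (k - j) true

/-- `w` avoids (as a not necessarily contiguous subsequence) the word
`0^j 1^{k−j}` for every `j ∈ {0,…,k}`. -/
def AvoidsAll (k : ℕ) (w : List Bool) : Prop := ∀ j ≤ k, ¬ (pat k j).Sublist w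

/-- `B(k,m)`: the number of binary words of length `m` avoiding `0^j 1^{k−j}`
for every `j ∈ {0,…,k}`. -/
noncomputable def B (k m : ℕ) : ℕ := {w : List Bool | w.length = m ∧ AvoidsAll k w}.ncard



/-- central binomial difference is Catalan -/
lemma cat_diff (n : ℕ) : ((2*n).choose n : ℤ) - (2*n).choose (n+1) = catalan n := by
  have h1 : (2*n).choose (n+1) * (n+1) = (2*n).choose n * n := by
    have := Nat.choose_succ_right_eq (2*n) n
    simpa [show 2*n - n = n by omega] using this
  have h2 : (n + 1) * catalan n = (2*n).choose n := by
    simpa [Nat.centralBinom] using succ_mul_catalan_eq_centralBinom n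
  have key : ((n:ℤ)+1) * (((2*n).choose n : ℤ) - (2*n).choose (n+1)) = ((n:ℤ)+1) * catalan n := by
    have h1' : ((2*n).choose (n+1) : ℤ) * (n+1) = (2*n).choose n * n := by exact_mod_cast h1
    have h2' : ((n:ℤ) + 1) * catalan n = (2*n).choose n := by exact_mod_cast h2
    ring_nf
    ring_nf at h1' h2'
    linarith
  have : ((n:ℤ)+1) ≠ 0 := by positivity
  exact mul_left_cancel₀ this key

lemma cat_diff' (n : ℕ) (hn : 1 ≤ n) :
    ((2*n-1).choose n : ℤ) - (2*n-1).choose (n+1) = catalan n := by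
  have e1 : 2*n = (2*n-1) + 1 := by omega
  have p1 : (2*n).choose (n+1) = (2*n-1).choose n + (2*n-1).choose (n+1) := by
    rw [e1]; exact Nat.choose_succ_succ _ _
  have p2 : (2*n).choose n = (2*n-1).choose (n-1) + (2*n-1).choose n := by
    obtain ⟨a, ha⟩ : ∃ a, 2*n-1 = a := ⟨_, rfl⟩
    obtain ⟨b, hb⟩ : ∃ b, n-1 = b := ⟨_, rfl⟩
    have h1 : 2*n = a+1 := by omega
    have h2 : n = b+1 := by omega
    rw [ha, hb, h1, h2, Nat.choose_succ_succ]
  have sym : (2*n-1).choose (n-1) = (2*n-1).choose n := by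
    have h : (2*n-1) - n = n - 1 := by omega
    calc (2*n-1).choose (n-1) = (2*n-1).choose ((2*n-1) - n) := by rw [h]
    _ = (2*n-1).choose n := Nat.choose_symm (by omega)
  have := cat_diff n
  push_cast [p1, p2, sym] at this ⊢
  linarith



noncomputable def Scal (κ m : ℕ) : ℤ :=
  ∑ i ∈ Finset.range (κ+1),
    (-1:ℤ)^i * ((2*κ - m - i).choose i : ℤ) * (catalan (κ - i) : ℤ)

noncomputable def Dcal (κ m : ℕ) : ℤ :=
  if κ ≤ m ∧ m ≤ 2*κ then ((m.choose κ : ℤ) - (m.choose (κ+1) : ℤ)) else 0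

lemma Scal_peel (κ m : ℕ) :
    Scal κ m = (∑ i ∈ Finset.range κ,
      (-1:ℤ)^(i+1) * ((2*κ - m - (i+1)).choose (i+1) : ℤ) * (catalan (κ - (i+1)) : ℤ))
      + (catalan κ : ℤ) := by
  rw [Scal, Finset.sum_range_succ']
  simp

lemma Scal_top (κ m : ℕ) (hm : 2*κ ≤ m + 1) : Scal κ m = catalan κ := by
  rw [Scal_peel]
  have : ∀ i ∈ Finset.range κ,
      (-1:ℤ)^(i+1) * ((2*κ - m - (i+1)).choose (i+1) : ℤ) * (catalan (κ - (i+1)) : ℤ) = 0 := by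
    intro i _
    have h1 : 2*κ - m - (i+1) = 0 := by omega
    rw [h1, Nat.choose_zero_succ]
    simp
  rw [Finset.sum_congr rfl this]
  simp

lemma Dcal_two_mul (κ : ℕ) : Dcal κ (2*κ) = catalan κ := by
  rw [Dcal, if_pos ⟨by omega, le_refl _⟩, cat_diff]

lemma Dcal_two_mul_sub_one (κ : ℕ) (hκ : 1 ≤ κ) : Dcal κ (2*κ-1) = catalan κ := by
  rw [Dcal, if_pos ⟨by omega, by omega⟩, cat_diff' κ hκ]

lemma pasc (κ m i : ℕ) (hm : m ≤ 2*κ - 2) (hκ : 1 ≤ κ) :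
    (2*κ - m - (i+1)).choose (i+1)
      = (2*κ - (m+1) - (i+1)).choose (i+1) + (2*κ - m - 2 - i).choose i := by
  by_cases h : m + i + 2 ≤ 2*κ
  · have e : 2*κ - m - (i+1) = (2*κ - m - 2 - i) + 1 := by omega
    have e2 : 2*κ - (m+1) - (i+1) = 2*κ - m - 2 - i := by omega
    rw [e, e2, Nat.choose_succ_succ]
    simp only [Nat.succ_eq_add_one]
    omega
  · have hi : 1 ≤ i := by omega
    have h1 : 2*κ - m - (i+1) = 0 := by omega
    have h2 : 2*κ - (m+1) - (i+1) = 0 := by omega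
    have h3 : 2*κ - m - 2 - i = 0 := by omega
    rw [h1, h2, h3, Nat.choose_zero_succ,
      show i = (i-1)+1 by omega, Nat.choose_zero_succ]

lemma Scal_rec (κ m : ℕ) (hκ : 1 ≤ κ) (hm : m ≤ 2*κ - 2) :
    Scal κ m = Scal κ (m+1) - Scal (κ-1) m := by
  have key : Scal κ m - Scal κ (m+1) = - Scal (κ-1) m := by
    rw [Scal_peel κ m, Scal_peel κ (m+1)]
    have expand : ∀ i ∈ Finset.range κ,
        (-1:ℤ)^(i+1) * ((2*κ - m - (i+1)).choose (i+1) : ℤ) * (catalan (κ - (i+1)) : ℤ)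
        - (-1:ℤ)^(i+1) * ((2*κ - (m+1) - (i+1)).choose (i+1) : ℤ) * (catalan (κ - (i+1)) : ℤ)
        = -((-1:ℤ)^i * ((2*(κ-1) - m - i).choose i : ℤ) * (catalan ((κ-1) - i) : ℤ)) := by
      intro i _
      have hp := pasc κ m i hm hκ
      have e1 : 2*κ - m - 2 - i = 2*(κ-1) - m - i := by omega
      have e2 : κ - (i+1) = (κ-1) - i := by omega
      rw [hp, e1, e2]
      push_cast
      ring
    have : Scal (κ-1) m = ∑ i ∈ Finset.range κ,
        (-1:ℤ)^i * ((2*(κ-1) - m - i).choose i : ℤ) * (catalan ((κ-1) - i) : ℤ) := by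
      rw [Scal, show (κ-1)+1 = κ by omega]
    rw [this]
    rw [← Finset.sum_neg_distrib, ← Finset.sum_congr rfl expand, Finset.sum_sub_distrib]
    ring
  linarith

lemma Dcal_rec (κ m : ℕ) (hκ : 1 ≤ κ) (hm : m ≤ 2*κ - 2) :
    Dcal κ m = Dcal κ (m+1) - Dcal (κ-1) m := by
  rcases lt_trichotomy m (κ-1) with h | h | h
  · rw [Dcal, if_neg (by omega), Dcal, if_neg (by omega), Dcal, if_neg (by omega)]
    ring
  · -- m = κ-1
    rw [Dcal, if_neg (by omega), Dcal, if_pos ⟨by omega, by omega⟩,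
      Dcal, if_pos ⟨by omega, by omega⟩]
    have c1 : (m+1).choose κ = 1 := by rw [show m+1 = κ by omega]; exact Nat.choose_self κ
    have c2 : (m+1).choose (κ+1) = 0 := Nat.choose_eq_zero_of_lt (by omega)
    have c3 : m.choose (κ-1) = 1 := by rw [show m = κ-1 by omega]; exact Nat.choose_self _
    have c4 : m.choose (κ-1+1) = 0 := Nat.choose_eq_zero_of_lt (by omega)
    rw [c1, c2, c3, c4]
    norm_num
  · -- κ ≤ m ≤ 2κ-2
    rw [Dcal, if_pos ⟨by omega, by omega⟩, Dcal, if_pos ⟨by omega, by omega⟩,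
      Dcal, if_pos ⟨by omega, by omega⟩]
    have p1 : (m+1).choose κ = m.choose (κ-1) + m.choose κ := by
      have := Nat.choose_succ_succ m (κ-1)
      simp only [Nat.succ_eq_add_one] at this
      rw [show (κ-1)+1 = κ by omega] at this
      exact this
    have p2 : (m+1).choose (κ+1) = m.choose κ + m.choose (κ+1) := Nat.choose_succ_succ m κ
    rw [p1, p2, show (κ-1)+1 = κ by omega]
    push_cast; ring

lemma Scal_eq_Dcal : ∀ κ m : ℕ, m ≤ 2*κ → Scal κ m = Dcal κ m := by
  intro κ
  induction κ with
  | zero =>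
    intro m hm
    have : m = 0 := by omega
    subst this
    rw [Scal_top 0 0 (by omega), Dcal_two_mul 0]
  | succ n ih =>
    have H : ∀ d m, 2*(n+1) ≤ m + d → m ≤ 2*(n+1) → Scal (n+1) m = Dcal (n+1) m := by
      intro d
      induction d with
      | zero =>
        intro m h1 h2
        have : m = 2*(n+1) := by omega
        subst this
        rw [Scal_top _ _ (by omega), Dcal_two_mul]
      | succ e ihe =>
        intro m h1 h2
        rcases eq_or_lt_of_le h2 with h | h
        · subst h; rw [Scal_top _ _ (by omega), Dcal_two_mul]
        rcases Nat.eq_or_lt_of_le (Nat.lt_iff_add_one_le.mp h) with h' | h'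
        · -- m + 1 = 2(n+1), i.e. m = 2(n+1) - 1
          have : m = 2*(n+1) - 1 := by omega
          subst this
          rw [Scal_top _ _ (by omega), Dcal_two_mul_sub_one _ (by omega)]

        · have hm2 : m ≤ 2*(n+1) - 2 := by omega
          have h3 := ihe (m+1) (by omega) (by omega)
          have h4 := ih m (by omega)
          rw [Scal_rec _ _ (by omega) hm2, Dcal_rec _ _ (by omega) hm2, h3,
            show (n+1)-1 = n by omega, h4]
    exact fun m hm => H (2*(n+1)) m (by omega) hm


noncomputable def Wg (k r m : ℕ) : ℤ :=
  ∑ z ∈ Finset.Icc (m - r) (k - 1), ((m.choose z : ℤ) - (m.choose k : ℤ))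


lemma sum_Icc_shift (f : ℕ → ℤ) (a b : ℕ) :
    ∑ z ∈ Finset.Icc (a+1) (b+1), f z = ∑ z ∈ Finset.Icc a b, f (z+1) := by
  rw [← Finset.map_add_right_Icc a b 1, Finset.sum_map]
  rfl

lemma pascal_int (m z : ℕ) (hz : 1 ≤ z) :
    (((m+1).choose z : ℤ)) = (m.choose z : ℤ) + (m.choose (z-1) : ℤ) := by
  have h := Nat.choose_succ_succ m (z-1)
  simp only [Nat.succ_eq_add_one] at h
  rw [show (z-1)+1 = z by omega] at h
  rw [h]
  push_cast; ring

lemma sum_choose_Icc_zero (n N : ℕ) (h : n ≤ N) :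
    ∑ z ∈ Finset.Icc 0 N, ((n.choose z : ℤ)) = 2^n := by
  have e : Finset.Icc 0 N = Finset.range (N+1) := by
    ext x; simp [Nat.lt_succ_iff]
  rw [e]
  have sub : Finset.range (n+1) ⊆ Finset.range (N+1) := by
    apply Finset.range_subset_range.mpr; omega
  rw [← Finset.sum_subset sub (by
    intro x _ hx
    simp only [Finset.mem_range, Nat.lt_succ_iff] at hx
    have : n < x := by
      simp only [Finset.mem_range, Nat.lt_succ_iff, not_le] at hx
      omega
    simp [Nat.choose_eq_zero_of_lt this])]
  have := Nat.sum_range_choose n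
  exact_mod_cast congrArg (Nat.cast : ℕ → ℤ) this

lemma pascal_split (m lo k : ℕ) (hlo : 1 ≤ lo) (hk : 2 ≤ k) :
    ∑ z ∈ Finset.Icc lo (k-1), (((m+1).choose z : ℤ) - ((m+1).choose k : ℤ))
      = (∑ z ∈ Finset.Icc lo (k-1), ((m.choose z : ℤ) - (m.choose k : ℤ)))
      + ∑ z ∈ Finset.Icc (lo-1) (k-2), ((m.choose z : ℤ) - (m.choose (k-1) : ℤ)) := by
  have shift : ∑ z ∈ Finset.Icc (lo-1) (k-2), ((m.choose z : ℤ) - (m.choose (k-1) : ℤ))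
      = ∑ z ∈ Finset.Icc lo (k-1), ((m.choose (z-1) : ℤ) - (m.choose (k-1) : ℤ)) := by
    have e : ∑ z ∈ Finset.Icc ((lo-1)+1) ((k-2)+1), ((m.choose (z-1) : ℤ) - (m.choose (k-1) : ℤ))
        = ∑ z ∈ Finset.Icc (lo-1) (k-2), ((m.choose (z+1-1) : ℤ) - (m.choose (k-1) : ℤ)) :=
      sum_Icc_shift _ _ _
    rw [show (lo-1)+1 = lo by omega, show (k-2)+1 = k-1 by omega] at e
    rw [e]
    apply Finset.sum_congr rfl
    intro z _
    rw [show z+1-1 = z by omega]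
  rw [shift, ← Finset.sum_add_distrib]
  apply Finset.sum_congr rfl
  intro z hz
  have hz1 : 1 ≤ z := le_trans hlo (Finset.mem_Icc.mp hz).1
  rw [pascal_int m z hz1, pascal_int m k (by omega)]
  ring

lemma Wg_pow (k r m : ℕ) (h1 : m ≤ r) (h2 : m+1 ≤ k) : Wg k r m = 2^m := by
  unfold Wg
  rw [show m - r = 0 by omega, Finset.sum_sub_distrib,
    sum_choose_Icc_zero m (k-1) (by omega),
    show m.choose k = 0 from Nat.choose_eq_zero_of_lt (by omega)]
  simp

lemma Wg_one (k m : ℕ) (hk : 1 ≤ k) (h : m ≤ k-1) : Wg k 0 m = 1 := by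
  unfold Wg
  rw [show m - 0 = m by omega]
  rw [Finset.sum_eq_single_of_mem m (by simp only [Finset.mem_Icc, not_and, not_le]; omega)]
  · rw [Nat.choose_self, show m.choose k = 0 from Nat.choose_eq_zero_of_lt (by omega)]
    simp
  · intro z hz hne
    have hzm : m < z := by
      have := (Finset.mem_Icc.mp hz).1; omega
    rw [Nat.choose_eq_zero_of_lt hzm,
      show m.choose k = 0 from Nat.choose_eq_zero_of_lt (by omega)]
    simp

lemma Wg_empty (k r m : ℕ) (h : k - 1 < m - r) : Wg k r m = 0 := by
  unfold Wg
  rw [Finset.Icc_eq_empty (by omega)]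
  simp

lemma L2c (m : ℕ) : Wg 1 0 (m+1) = 0 := Wg_empty 1 0 (m+1) (by omega)

lemma L2b (k m : ℕ) (hk : 2 ≤ k) : Wg k 0 (m+1) = Wg (k-1) 0 m := by
  by_cases hm : m ≤ k-2
  · rw [Wg_one k (m+1) (by omega) (by omega), Wg_one (k-1) m (by omega) (by omega)]
  · rw [Wg_empty k 0 (m+1) (by omega), Wg_empty (k-1) 0 m (by omega)]

lemma L2a (k r m : ℕ) (hk : 2 ≤ k) (hr1 : 1 ≤ r) (hr2 : r ≤ k-1) :
    Wg k r (m+1) = Wg k (r-1) m + Wg (k-1) (min r (k-2)) m := by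
  by_cases hcase : r ≤ k-2
  · rw [min_eq_left hcase]
    by_cases hm : r ≤ m
    · unfold Wg
      have key := pascal_split m (m+1-r) k (by omega) hk
      rw [key]
      have e1 : Finset.Icc (m+1-r) (k-1) = Finset.Icc (m-(r-1)) (k-1) := by
        congr 1; omega
      have e2 : Finset.Icc (m+1-r-1) (k-2) = Finset.Icc (m-r) (k-1-1) := by
        congr 1 <;> omega
      rw [e1, e2]
    · rw [Wg_pow k r (m+1) (by omega) (by omega),
        Wg_pow k (r-1) m (by omega) (by omega),
        Wg_pow (k-1) r m (by omega) (by omega)]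
      ring
  · have hre : r = k-1 := by omega
    subst hre
    rw [min_eq_right (by omega)]
    by_cases hm : k-1 ≤ m
    · unfold Wg
      have key := pascal_split m (m+1-(k-1)) k (by omega) hk
      rw [key]
      have e1 : Finset.Icc (m+1-(k-1)) (k-1) = Finset.Icc (m-(k-1-1)) (k-1) := by
        congr 1; omega
      rw [e1]
      congr 1
      -- second sums: Icc (m+1-(k-1)-1) (k-2) vs Icc (m-(k-2)) ((k-1)-1)
      have e2 : Finset.Icc (m+1-(k-1)-1) (k-2) = Finset.Icc (m-(k-1)) (k-2) := by
        congr 1; omega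
      rw [e2]
      by_cases hm2 : m - (k-1) ≤ k-2
      · have e : Finset.Icc (m-(k-1)) (k-2)
            = insert (m-(k-1)) (Finset.Icc (m-(k-1)+1) (k-2)) := by
          rw [Finset.Icc_add_one_left_eq_Ioc, Finset.Ioc_insert_left hm2]
        rw [e, Finset.sum_insert (by simp only [Finset.mem_Icc, not_and, not_le]; omega)]
        have hzero : ((m.choose (m-(k-1)) : ℤ) - (m.choose (k-1) : ℤ)) = 0 := by
          rw [Nat.choose_symm hm]
          ring
        rw [hzero, zero_add]
        have e3 : Finset.Icc (m-(k-1)+1) (k-2) = Finset.Icc (m-(k-2)) (k-1-1) := by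
          congr 1 <;> omega
        rw [e3]
      · rw [Finset.Icc_eq_empty (by omega), Finset.Icc_eq_empty (by omega)]
    · rw [Wg_pow k (k-1) (m+1) (by omega) (by omega),
        Wg_pow k (k-1-1) m (by omega) (by omega),
        Wg_pow (k-1) (k-2) m (by omega) (by omega)]
      ring

lemma RL (k m : ℕ) (hk : 2 ≤ k) : Wg k (k-2) m = Wg k (k-1) m - Dcal (k-1) m := by
  by_cases h1 : m ≤ k-2
  · unfold Wg Dcal
    rw [show m-(k-2) = 0 by omega, show m-(k-1) = 0 by omega, if_neg (by omega)]
    ring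
  · by_cases h2 : m ≤ 2*k-2
    · unfold Wg Dcal
      rw [if_pos (by constructor <;> omega)]
      have e : Finset.Icc (m-(k-1)) (k-1)
          = insert (m-(k-1)) (Finset.Icc (m-(k-1)+1) (k-1)) := by
        rw [Finset.Icc_add_one_left_eq_Ioc, Finset.Ioc_insert_left (by omega)]
      rw [e, Finset.sum_insert (by simp only [Finset.mem_Icc, not_and, not_le]; omega),
        Nat.choose_symm (by omega : k-1 ≤ m)]
      have e2 : Finset.Icc (m-(k-1)+1) (k-1) = Finset.Icc (m-(k-2)) (k-1) := by
        congr 1; omega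
      have e3 : (k-1)+1 = k := by omega
      rw [e2, e3]
      ring
    · rw [Wg_empty k (k-2) m (by omega), Wg_empty k (k-1) m (by omega)]
      unfold Dcal
      rw [if_neg (by omega)]
      ring

-- new content
noncomputable def Rr (k m : ℕ) : ℤ :=
  ∑ j ∈ Finset.Icc 1 k,
    (-1 : ℤ) ^ (j - 1) * (j : ℤ) * ((2 * k - m - j).choose j : ℤ) *
      (catalan (k - j) : ℤ)

lemma Rr_range (k m : ℕ) :
    Rr k m = ∑ i ∈ Finset.range k,
      (-1:ℤ)^i * ((i+1 : ℕ) : ℤ) * ((2*k - m - (i+1)).choose (i+1) : ℤ)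
        * (catalan (k-(i+1)) : ℤ) := by
  rw [Rr, show Finset.Icc 1 k = Finset.Ico 1 (k+1) by rw [Finset.Ico_add_one_right_eq_Icc],
    Finset.sum_Ico_eq_sum_range, show k+1-1 = k by omega]
  apply Finset.sum_congr rfl
  intro i _
  rw [show 1+i = i+1 by omega, show i+1-1 = i by omega]

lemma Rr_vanish (k m : ℕ) (h : 2*k ≤ m+1) : Rr k m = 0 := by
  rw [Rr]
  apply Finset.sum_eq_zero
  intro j hj
  have hj1 : 1 ≤ j := (Finset.mem_Icc.mp hj).1
  rw [show 2*k - m - j = 0 by omega, show j = (j-1)+1 by omega, Nat.choose_zero_succ]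
  simp

lemma Wg_vanish (k m : ℕ) (hk : 1 ≤ k) (h : 2*k ≤ m+1) : Wg k (k-1) m = 0 :=
  Wg_empty k (k-1) m (by omega)

lemma Wg_zero (m : ℕ) : Wg 0 0 m = 0 := by
  by_cases hm : m = 0
  · subst hm; unfold Wg; simp
  · exact Wg_empty 0 0 m (by omega)

lemma Rr_zero (m : ℕ) : Rr 0 m = 0 := by
  rw [Rr]
  simp

lemma Rrec (k m : ℕ) (hk : 1 ≤ k) (hm : m ≤ 2*k-2) :
    Rr k (m+1) = Rr k m + Rr (k-1) m - Dcal (k-1) m := by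
  have hS : Scal (k-1) m = Dcal (k-1) m := Scal_eq_Dcal (k-1) m (by omega)
  have key : Rr k m - Rr k (m+1) + Rr (k-1) m = Scal (k-1) m := by
    have hB : Rr (k-1) m = ∑ i ∈ Finset.range k,
        (-1:ℤ)^(i-1) * (i : ℤ) * ((2*(k-1) - m - i).choose i : ℤ)
          * (catalan ((k-1)-i) : ℤ) := by
      have e : Finset.range k = insert 0 (Finset.Icc 1 (k-1)) := by
        ext x; simp only [Finset.mem_insert, Finset.mem_Icc, Finset.mem_range]; omega
      rw [Rr, e, Finset.sum_insert (by simp)]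
      simp
    rw [Rr_range k m, Rr_range k (m+1), hB, Scal, show (k-1)+1 = k by omega]
    rw [← Finset.sum_sub_distrib, ← Finset.sum_add_distrib]
    apply Finset.sum_congr rfl
    intro i _
    have hp := pasc k m i hm hk
    rw [hp]
    rw [show 2*(k-1) - m - i = 2*k-m-2-i by omega,
      show (k-1) - i = k - (i+1) by omega]
    by_cases hi0 : i = 0
    · subst hi0; push_cast; ring
    · have hsgn : (-1:ℤ)^(i-1) = -(-1:ℤ)^i := by
        have : (-1:ℤ)^i = (-1:ℤ)^(i-1) * (-1) := by
          rw [← pow_succ, show i-1+1 = i by omega]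
        rw [this]; ring
      rw [hsgn]; push_cast; ring
  linarith

lemma Wrec (k m : ℕ) (hk : 1 ≤ k) (hm : m ≤ 2*k-2) :
    Wg k (k-1) (m+1) = Wg k (k-1) m + Wg (k-1) (k-1-1) m - Dcal (k-1) m := by
  by_cases hk2 : 2 ≤ k
  · rw [L2a k (k-1) m hk2 (by omega) (le_refl _), min_eq_right (by omega),
      show k-1-1 = k-2 by omega, RL k m hk2]
    ring
  · have hk1 : k = 1 := by omega
    subst hk1
    have hm0 : m = 0 := by omega
    subst hm0
    have h1 : Wg 1 (1-1) (0+1) = 0 := L2c 0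
    have h2 : Wg 1 (1-1) 0 = 1 := Wg_one 1 0 (by omega) (by omega)
    have h3 : Wg (1-1) (1-1-1) 0 = 0 := Wg_zero 0
    have h4 : Dcal (1-1) 0 = 1 := by
      have := Dcal_two_mul 0
      simpa using this
    rw [h1, h2, h3, h4]
    ring

lemma W_eq_R : ∀ k m, Wg k (k-1) m = Rr k m := by
  intro k
  induction k with
  | zero =>
    intro m
    rw [show (0:ℕ)-1 = 0 from rfl, Wg_zero, Rr_zero]
  | succ n ih =>
    have H : ∀ d m, 2*(n+1) ≤ m + d + 1 → Wg (n+1) (n+1-1) m = Rr (n+1) m := by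
      intro d
      induction d with
      | zero =>
        intro m h1
        rw [Wg_vanish (n+1) m (by omega) (by omega), Rr_vanish (n+1) m (by omega)]
      | succ e ihe =>
        intro m h1
        by_cases hcase : 2*(n+1) ≤ m+1
        · rw [Wg_vanish (n+1) m (by omega) hcase, Rr_vanish (n+1) m hcase]
        · have hm : m ≤ 2*(n+1)-2 := by omega
          have hW := Wrec (n+1) m (by omega) hm
          have hR := Rrec (n+1) m (by omega) hm
          have h3 := ihe (m+1) (by omega)
          have h4 : Wg (n+1-1) (n+1-1-1) m = Rr (n+1-1) m := by
            rw [show n+1-1 = n by omega]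
            exact ih m
          linarith
    exact fun m => H (2*(n+1)) m (by omega)



def AvF (k r : ℕ) (w : List Bool) : Prop :=
  ¬ (List.replicate (r+1) true).Sublist w ∧
    ∀ j, 1 ≤ j → j ≤ k → ¬ (pat k j).Sublist w

def Fset (k r m : ℕ) : Set (List Bool) := {w | w.length = m ∧ AvF k r w}

lemma sublist_cons_of_ne {p : List Bool} {a b : Bool} {w : List Bool} (hne : a ≠ b) :
    (a :: p).Sublist (b :: w) ↔ (a :: p).Sublist w := by
  rw [List.cons_sublist_cons']
  constructor
  · rintro (h | ⟨h, -⟩)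
    · exact h
    · exact absurd h hne
  · exact Or.inl

lemma pat_zero (k : ℕ) : pat k 0 = List.replicate k true := by
  simp [pat]

lemma pat_succ (k j : ℕ) (h : j + 1 ≤ k) : pat k (j+1) = false :: pat (k-1) j := by
  have e : k - (j+1) = k - 1 - j := by omega
  simp only [pat, List.replicate_succ, List.cons_append, e]

lemma pat_ne_nil (k j : ℕ) (hk : 1 ≤ k) : pat k j ≠ [] := by
  simp only [pat, ne_eq, List.append_eq_nil_iff, List.replicate_eq_nil_iff, not_and]
  intro h
  omega

lemma AvF_nil (k r : ℕ) (hk : 1 ≤ k) : AvF k r [] := by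
  constructor
  · intro h
    have := List.sublist_nil.mp h
    simp [List.replicate_eq_nil_iff] at this
  · intro j _ _ h
    exact pat_ne_nil k j hk (List.sublist_nil.mp h)

lemma AvF_true (k r : ℕ) (w : List Bool) (hk : 1 ≤ k) (hr : 1 ≤ r) :
    AvF k r (true :: w) ↔ AvF k (r-1) w := by
  have hrep : (List.replicate (r+1) true).Sublist (true :: w)
      ↔ (List.replicate ((r-1)+1) true).Sublist w := by
    rw [List.replicate_succ, List.cons_sublist_cons, show (r-1)+1 = r by omega]
  have hpat : ∀ j, 1 ≤ j → j ≤ k →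
      ((pat k j).Sublist (true :: w) ↔ (pat k j).Sublist w) := by
    intro j h1 h2
    rw [show j = (j-1)+1 by omega, pat_succ k (j-1) (by omega)]
    exact sublist_cons_of_ne (by simp)
  constructor
  · rintro ⟨h1, h2⟩
    exact ⟨fun h => h1 (hrep.mpr h), fun j hj1 hj2 h => h2 j hj1 hj2 ((hpat j hj1 hj2).mpr h)⟩
  · rintro ⟨h1, h2⟩
    exact ⟨fun h => h1 (hrep.mp h), fun j hj1 hj2 h => h2 j hj1 hj2 ((hpat j hj1 hj2).mp h)⟩

lemma AvF_true0 (k : ℕ) (w : List Bool) : ¬ AvF k 0 (true :: w) := by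
  rintro ⟨h1, -⟩
  apply h1
  rw [List.replicate_succ]
  exact List.cons_sublist_cons.mpr (by simp)

lemma AvF_false1 (r : ℕ) (w : List Bool) : ¬ AvF 1 r (false :: w) := by
  rintro ⟨-, h2⟩
  apply h2 1 le_rfl le_rfl
  have : pat 1 1 = [false] := by simp [pat]
  rw [this]
  exact List.cons_sublist_cons.mpr (by simp)

lemma rep_mono {a b : ℕ} (x : Bool) (h : a ≤ b) :
    (List.replicate a x).Sublist (List.replicate b x) :=
  (List.replicate_sublist_replicate x).mpr h

lemma AvF_false (k r : ℕ) (w : List Bool) (hk : 2 ≤ k) (hr : r ≤ k-1) :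
    AvF k r (false :: w) ↔ AvF (k-1) (min r (k-2)) w := by
  have hrep : (List.replicate (r+1) true).Sublist (false :: w)
      ↔ (List.replicate (r+1) true).Sublist w := by
    rw [List.replicate_succ]
    exact sublist_cons_of_ne (by simp)
  have hpat : ∀ j, 1 ≤ j → j ≤ k →
      ((pat k j).Sublist (false :: w) ↔ (pat (k-1) (j-1)).Sublist w) := by
    intro j h1 h2
    rw [show j = (j-1)+1 by omega, pat_succ k (j-1) (by omega),
      List.cons_sublist_cons, show (j-1)+1-1 = j-1 by omega]
  constructor
  · rintro ⟨h1, h2⟩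
    constructor
    · intro h
      by_cases hc : r ≤ k-2
      · rw [min_eq_left hc] at h
        exact h1 (hrep.mpr h)
      · rw [min_eq_right (by omega)] at h
        have : (pat (k-1) 0).Sublist w := by
          rw [pat_zero, show k-1 = (k-2)+1 by omega]
          exact h
        exact h2 1 le_rfl (by omega) ((hpat 1 le_rfl (by omega)).mpr this)
    · intro j hj1 hj2 h
      have : (pat (k-1) ((j+1)-1)).Sublist w := by
        rw [show (j+1)-1 = j by omega]
        exact h
      exact h2 (j+1) (by omega) (by omega) ((hpat (j+1) (by omega) (by omega)).mpr this)
  · rintro ⟨g1, g2⟩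
    constructor
    · intro h
      have hw : (List.replicate (r+1) true).Sublist w := hrep.mp h
      apply g1
      exact (rep_mono true (by omega)).trans hw
    · intro j hj1 hj2 h
      have hw := (hpat j hj1 hj2).mp h
      by_cases hj : 2 ≤ j
      · exact g2 (j-1) (by omega) (by omega) hw
      · have hj1' : j = 1 := by omega
        subst hj1'
        rw [pat_zero] at hw
        apply g1
        exact (rep_mono true (by omega)).trans hw

lemma Fset_finite (k r m : ℕ) : (Fset k r m).Finite :=
  (List.finite_length_eq Bool m).subset (fun w hw => hw.1)

lemma Fset_zero (k r : ℕ) (hk : 1 ≤ k) : Fset k r 0 = {[]} := by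
  ext w
  simp only [Fset, Set.mem_setOf_eq, Set.mem_singleton_iff, List.length_eq_zero_iff]
  constructor
  · rintro ⟨h, -⟩; exact h
  · rintro rfl; exact ⟨rfl, AvF_nil k r hk⟩

lemma Fset_succ (k r m : ℕ) (hk : 2 ≤ k) (hr1 : 1 ≤ r) (hr : r ≤ k-1) :
    Fset k r (m+1) = (fun w => true :: w) '' Fset k (r-1) m
      ∪ (fun w => false :: w) '' Fset (k-1) (min r (k-2)) m := by
  ext w
  constructor
  · rintro ⟨hlen, hav⟩
    cases w with
    | nil => simp at hlen
    | cons a t =>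
      cases a
      · right
        exact ⟨t, ⟨by simpa using hlen, (AvF_false k r t hk hr).mp hav⟩, rfl⟩
      · left
        exact ⟨t, ⟨by simpa using hlen, (AvF_true k r t (by omega) hr1).mp hav⟩, rfl⟩
  · rintro (⟨t, ⟨hl, ha⟩, rfl⟩ | ⟨t, ⟨hl, ha⟩, rfl⟩)
    · exact ⟨by simp [hl], (AvF_true k r t (by omega) hr1).mpr ha⟩
    · exact ⟨by simp [hl], (AvF_false k r t hk hr).mpr ha⟩

lemma Fset_succ0 (k m : ℕ) (hk : 2 ≤ k) :
    Fset k 0 (m+1) = (fun w => false :: w) '' Fset (k-1) 0 m := by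
  ext w
  constructor
  · rintro ⟨hlen, hav⟩
    cases w with
    | nil => simp at hlen
    | cons a t =>
      cases a
      · have h := (AvF_false k 0 t hk (by omega)).mp hav
        rw [show min 0 (k-2) = 0 by omega] at h
        exact ⟨t, ⟨by simpa using hlen, h⟩, rfl⟩
      · exact absurd hav (AvF_true0 k t)
  · rintro ⟨t, ⟨hl, ha⟩, rfl⟩
    refine ⟨by simp [hl], (AvF_false k 0 t hk (by omega)).mpr ?_⟩
    rw [show min 0 (k-2) = 0 by omega]
    exact ha

lemma Fset_succ1 (m : ℕ) : Fset 1 0 (m+1) = ∅ := by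
  ext w
  simp only [Set.mem_empty_iff_false, iff_false]
  rintro ⟨hlen, hav⟩
  cases w with
  | nil => simp at hlen
  | cons a t =>
    cases a
    · exact AvF_false1 0 t hav
    · exact AvF_true0 1 t hav

lemma cons_inj (a : Bool) : Function.Injective (fun w : List Bool => a :: w) := by
  intro x y h
  simpa using h

lemma Wg_m0 (k r : ℕ) (hk : 1 ≤ k) : Wg k r 0 = 1 := by
  unfold Wg
  rw [Nat.zero_sub]
  rw [Finset.sum_eq_single_of_mem 0 (by simp only [Finset.mem_Icc]; omega)]
  · rw [Nat.choose_self, show Nat.choose 0 k = 0 from Nat.choose_eq_zero_of_lt (by omega)]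
    simp
  · intro z hz hne
    rw [show Nat.choose 0 z = 0 from Nat.choose_eq_zero_of_lt (by omega),
      show Nat.choose 0 k = 0 from Nat.choose_eq_zero_of_lt (by omega)]
    simp

lemma main_comb : ∀ m k r, 1 ≤ k → r ≤ k-1 → ((Fset k r m).ncard : ℤ) = Wg k r m := by
  intro m
  induction m with
  | zero =>
    intro k r hk hr
    rw [Fset_zero k r hk, Set.ncard_singleton, Wg_m0 k r hk]
    simp
  | succ m ihm =>
    intro k r hk hr
    by_cases hk2 : 2 ≤ k
    · by_cases hr1 : 1 ≤ r
      · rw [Fset_succ k r m hk2 hr1 hr]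
        rw [Set.ncard_union_eq
            (by
              rw [Set.disjoint_left]
              rintro x ⟨t, -, rfl⟩ ⟨t', -, h⟩
              simp at h)
            ((Fset_finite k (r-1) m).image _)
            ((Fset_finite (k-1) (min r (k-2)) m).image _)]
        rw [Set.ncard_image_of_injective _ (cons_inj true),
          Set.ncard_image_of_injective _ (cons_inj false)]
        push_cast
        rw [ihm k (r-1) hk (by omega), ihm (k-1) (min r (k-2)) (by omega) (by omega)]
        exact (L2a k r m hk2 hr1 hr).symm
      · have hr0 : r = 0 := by omega
        subst hr0
        rw [Fset_succ0 k m hk2,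
          Set.ncard_image_of_injective _ (cons_inj false),
          ihm (k-1) 0 (by omega) (by omega)]
        exact (L2b k m hk2).symm
    · have hk1 : k = 1 := by omega
      have hr0 : r = 0 := by omega
      subst hk1; subst hr0
      rw [Fset_succ1 m]
      simp only [Set.ncard_empty, Nat.cast_zero]
      exact (L2c m).symm


lemma AA_iff (k : ℕ) (hk : 1 ≤ k) (w : List Bool) : AvoidsAll k w ↔ AvF k (k-1) w := by
  constructor
  · intro h
    refine ⟨?_, fun j h1 h2 => h j h2⟩
    have h0 := h 0 (by omega)
    rw [pat_zero] at h0
    rw [show (k-1)+1 = k by omega]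
    exact h0
  · rintro ⟨h1, h2⟩ j hj
    rcases Nat.eq_zero_or_pos j with rfl | hjp
    · rw [pat_zero]
      have e : (k-1)+1 = k := by omega
      rw [← e]
      exact h1
    · exact h2 j hjp hj

/-- For `k ≥ 1` and `m ≥ 0`,
`B(k,m) = Σ_{j=1}^{k} (−1)^{j−1} · j · binom(2k−m−j, j) · C_{k−j}` in ℤ, where
the binomial coefficient vanishes when `2k−m−j < j` or `2k−m−j < 0` (which is
exactly the behaviour of truncated subtraction together with `Nat.choose`). -/
theorem B_eq_alternating_sum (k m : ℕ) (hk : 1 ≤ k) :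
    (B k m : ℤ) =
      ∑ j ∈ Finset.Icc 1 k,
        (-1 : ℤ) ^ (j - 1) * (j : ℤ) * ((2 * k - m - j).choose j : ℤ) *
          (catalan (k - j) : ℤ) := by
  have hset : {w : List Bool | w.length = m ∧ AvoidsAll k w} = Fset k (k-1) m := by
    ext w
    simp only [Fset, Set.mem_setOf_eq]
    exact and_congr_right fun _ => AA_iff k hk w
  calc (B k m : ℤ) = ((Fset k (k-1) m).ncard : ℤ) := by rw [B, hset]
    _ = Wg k (k-1) m := main_comb m k (k-1) hk (le_refl _)
    _ = Rr k m := W_eq_R k m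
    _ = _ := by rw [Rr]
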